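/- Let X ∈ ℂ^{N×M} with N ≤ M and XX* positive definite, and fix a singular value decomposition X = UΣV* with U ∈ ℂ^{N×N}, V ∈ ℂ^{M×M} unitary and Σ = [Σ₀ 0] with Σ₀ = diag(σ_1,…,σ_N), σ_j > 0; set λ_j = σ_j², the eigenvalues of W = XX*. Let b ∈ ℂ^M with Xb ≠ 0, define the measure ν = Σ_{j=1}^N |(V*b)_j|² δ_{λ_j}, and suppose the support of ν contains at least k+2 points. Let x_k be the minimizer of ‖W⁻¹Xb − y‖_W over the Krylov subspace K_k = span{Xb, W(Xb), …, W^{k−1}(Xb)} (the k-th conjugate gradient iterate for the normal equations W x = Xb). Then the error e_k = W⁻¹Xb − x_k satisfies ‖e_k‖_W² = 1/Σ_{j=0}^k p_j(0;ν)², where p_j(·;ν) are the orthonormal polynomials with respect to ν. -/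

import Mathlib

open MeasureTheory Matrix Polynomial
open scoped ComplexOrder

/-!
Write `W = X Xᴴ = U diag(σ²) Uᴴ`. A vector of the Krylov space is `Q(W) X b = Q(W) W x`, so its
error is `r(W) x` for the residual polynomial `r = 1 - X Q`, which ranges over the polynomials of
degree `≤ k` with `r(0) = 1`; in the eigenbasis, `‖r(W) x‖_W² = ∑ⱼ |(Vᴴ b)ⱼ|² |r(λⱼ)|² = ∫ |r|² dν`.
Replacing the coefficients of `r` by their real parts does not increase this, so the error of the
CG iterate is the minimum of `∫ r² dν` over real such `r`. Writing `r = ∑ aⱼ pⱼ`, this integral is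
`∑ aⱼ²` while `1 = r(0) = ∑ aⱼ pⱼ(0)`, so by Cauchy–Schwarz the minimum is `1 / ∑ pⱼ(0)²`, attained
at `aⱼ ∝ pⱼ(0)`.
-/

namespace Polynomial

theorem exists_sum_smul_eq_of_natDegree_le {K : Type*} [Field K] {k : ℕ} {p : ℕ → K[X]}
    (hdeg : ∀ j ≤ k, (p j).natDegree = j) (hne : ∀ j ≤ k, p j ≠ 0) {q : K[X]}
    (hq : q.natDegree ≤ k) : ∃ a : Fin (k + 1) → K, ∑ j, a j • p j = q := by
  let S : Sequence K :=
    ⟨fun j => if j ≤ k then p j else X ^ j, fun j => by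
      split_ifs with hj
      · rw [degree_eq_natDegree (hne j hj), hdeg j hj]
      · exact degree_X_pow j⟩
  have hspan := S.span_degreeLE (m := k) fun j hj => by
    simpa [S, hj] using hne j hj
  have himage : S '' Set.Iic k = Set.range fun j : Fin (k + 1) => p j := by
    ext f
    simp only [Set.mem_image, Set.mem_Iic, Set.mem_range]
    constructor
    · rintro ⟨j, hj, rfl⟩
      exact ⟨⟨j, Nat.lt_succ_of_le hj⟩, by simp [S, hj]⟩
    · rintro ⟨j, rfl⟩
      exact ⟨j, Nat.le_of_lt_succ j.isLt, by simp [S, Nat.le_of_lt_succ j.isLt]⟩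
  have hqmem : q ∈ degreeLE K k := mem_degreeLE.mpr (natDegree_le_iff_degree_le.mp hq)
  rw [← hspan, himage] at hqmem
  exact (Submodule.mem_span_range_iff_exists_fun K).mp hqmem

end Polynomial

namespace LinearMap.BilinForm

theorem apply_sum_smul_self_of_orthonormal {R M : Type*} [CommRing R] [AddCommGroup M]
    [Module R M] (B : LinearMap.BilinForm R M) {p : ℕ → M} {k : ℕ}
    (horth : ∀ i ≤ k, ∀ j ≤ k, B (p i) (p j) = if i = j then 1 else 0) (a : Fin (k + 1) → R) :
    B (∑ j, a j • p j) (∑ j, a j • p j) = ∑ j, a j ^ 2 := by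
  have hv (i j : Fin (k + 1)) : B (p i) (p j) = if i = j then 1 else 0 := by
    simp [horth i (Nat.le_of_lt_succ i.isLt) j (Nat.le_of_lt_succ j.isLt), Fin.ext_iff]
  simp [map_sum, LinearMap.sum_apply, hv, sq]

end LinearMap.BilinForm

namespace Polynomial

noncomputable def christoffel {𝕜 : Type*} [Field 𝕜] (p : ℕ → 𝕜[X]) (k : ℕ) (z : 𝕜) : 𝕜 :=
  (∑ j ∈ Finset.range (k + 1), (p j).eval z ^ 2)⁻¹

section Christoffel

variable {𝕜 : Type*} [Field 𝕜] [LinearOrder 𝕜] [IsStrictOrderedRing 𝕜]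
  {B : LinearMap.BilinForm 𝕜 𝕜[X]} {p : ℕ → 𝕜[X]} {k : ℕ}
  (hdeg : ∀ j ≤ k, (p j).natDegree = j)
  (horth : ∀ i ≤ k, ∀ j ≤ k, B (p i) (p j) = if i = j then 1 else 0)
include hdeg horth

theorem one_le_apply_self_mul_sum_eval_sq {z : 𝕜} {q : 𝕜[X]} (hq : q.natDegree ≤ k)
    (hqz : q.eval z = 1) : 1 ≤ B q q * ∑ j ∈ Finset.range (k + 1), (p j).eval z ^ 2 := by
  have hne : ∀ j ≤ k, p j ≠ 0 := fun j hj h0 => by simpa [h0] using horth j hj j hj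
  obtain ⟨a, rfl⟩ := exists_sum_smul_eq_of_natDegree_le hdeg hne hq
  have hcs := Finset.sum_mul_sq_le_sq_mul_sq Finset.univ a fun j => (p j).eval z
  simp only [eval_finsetSum, eval_smul, smul_eq_mul] at hqz
  rwa [hqz, one_pow, Fin.sum_univ_eq_sum_range (fun j => (p j).eval z ^ 2),
    ← B.apply_sum_smul_self_of_orthonormal horth] at hcs

theorem sum_eval_sq_pos (z : 𝕜) : 0 < ∑ j ∈ Finset.range (k + 1), (p j).eval z ^ 2 := by
  have h := one_le_apply_self_mul_sum_eval_sq hdeg horth (natDegree_one.trans_le k.zero_le)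
    (eval_one (x := z))
  refine (Finset.sum_nonneg fun _ _ => sq_nonneg _).lt_of_ne fun h0 => ?_
  rw [← h0, mul_zero] at h
  exact zero_lt_one.not_ge h

theorem isLeast_christoffel (z : 𝕜) :
    IsLeast ((fun q => B q q) '' {q | q.natDegree ≤ k ∧ q.eval z = 1}) (christoffel p k z) := by
  set S := ∑ j ∈ Finset.range (k + 1), (p j).eval z ^ 2 with hS
  have hSpos : 0 < S := sum_eval_sq_pos hdeg horth z
  have hSfin : ∑ j : Fin (k + 1), (p j).eval z ^ 2 = S :=
    Fin.sum_univ_eq_sum_range (fun j => (p j).eval z ^ 2) _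
  refine ⟨⟨∑ j : Fin (k + 1), ((p j).eval z / S) • p j, ⟨?_, ?_⟩, ?_⟩, ?_⟩
  · refine natDegree_sum_le_of_forall_le _ _ fun j _ => (natDegree_smul_le _ _).trans ?_
    exact (hdeg j (Nat.le_of_lt_succ j.isLt)).trans_le (Nat.le_of_lt_succ j.isLt)
  · simp only [eval_finsetSum, eval_smul, smul_eq_mul, div_mul_eq_mul_div, ← sq, ← Finset.sum_div,
      hSfin, div_self hSpos.ne']
  · simp only [B.apply_sum_smul_self_of_orthonormal horth, div_pow,
      ← Finset.sum_div, hSfin, christoffel, ← hS]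
    field_simp
  · rintro _ ⟨q, ⟨hq, hqz⟩, rfl⟩
    rw [christoffel, inv_le_iff_one_le_mul₀' hSpos, mul_comm]
    exact one_le_apply_self_mul_sum_eval_sq hdeg horth hq hqz

end Christoffel

section Residual

variable {R : Type*} [CommRing R] {k : ℕ}

noncomputable def residualPoly (c : Fin k → R) : R[X] :=
  1 - ∑ i, C (c i) * X ^ ((i : ℕ) + 1)

theorem natDegree_residualPoly_le (c : Fin k → R) : (residualPoly c).natDegree ≤ k :=
  (natDegree_sub_le _ _).trans <| max_le (by simp) <| natDegree_sum_le_of_forall_le _ _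
    fun i _ => (natDegree_C_mul_X_pow_le (c i) _).trans i.isLt

theorem eval_zero_residualPoly (c : Fin k → R) : (residualPoly c).eval 0 = 1 := by
  simp [residualPoly, eval_finsetSum]

theorem exists_residualPoly_eq {q : R[X]} (hq : q.natDegree ≤ k) (hq0 : q.eval 0 = 1) :
    ∃ c : Fin k → R, residualPoly c = q := by
  refine ⟨fun i => -q.coeff (i + 1), ?_⟩
  conv_rhs => rw [as_sum_range_C_mul_X_pow' q (Nat.lt_succ_of_le hq)]
  rw [Finset.sum_range_succ', coeff_zero_eq_eval_zero, hq0, residualPoly,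
    Fin.sum_univ_eq_sum_range (fun i => C (-q.coeff (i + 1)) * X ^ (i + 1))]
  simp [sub_eq_add_neg, add_comm]

end Residual

theorem eval_ofReal_residualPoly {k : ℕ} (c : Fin k → ℝ) (t : ℝ) :
    (residualPoly fun i => (c i : ℂ)).eval (t : ℂ) = (residualPoly c).eval t := by
  simp [residualPoly, eval_finsetSum]

theorem re_eval_residualPoly {k : ℕ} (c : Fin k → ℂ) (t : ℝ) :
    ((residualPoly c).eval (t : ℂ)).re = (residualPoly fun i => (c i).re).eval t := by
  simp [residualPoly, eval_finsetSum, Complex.re_sum, ← Complex.ofReal_pow]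

noncomputable def weightedEvalForm {R ι : Type*} [CommRing R] [Fintype ι] (w t : ι → R) :
    LinearMap.BilinForm R R[X] :=
  ∑ j, w j • (LinearMap.mul R R).compl₁₂ (leval (t j)) (leval (t j))

theorem weightedEvalForm_apply {R ι : Type*} [CommRing R] [Fintype ι] (w t : ι → R)
    (f g : R[X]) :
    weightedEvalForm w t f g = ∑ j, w j * (f.eval (t j) * g.eval (t j)) := by
  simp [weightedEvalForm, LinearMap.sum_apply]

end Polynomial

theorem MeasureTheory.integral_sum_smul_dirac {α ι E : Type*} [MeasurableSpace α]
    [MeasurableSingletonClass α] [Fintype ι] [NormedAddCommGroup E] [NormedSpace ℝ E]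
    [CompleteSpace E] {w : ι → ℝ} (hw : ∀ j, 0 ≤ w j) (t : ι → α) (f : α → E) :
    ∫ x, f x ∂(∑ j, ENNReal.ofReal (w j) • Measure.dirac (t j)) = ∑ j, w j • f (t j) := by
  rw [integral_finsetSum_measure fun j _ =>
    (integrable_dirac enorm_lt_top).smul_measure ENNReal.ofReal_ne_top]
  refine Finset.sum_congr rfl fun j _ => ?_
  rw [integral_smul_measure, integral_dirac, ENNReal.toReal_ofReal (hw j)]

theorem isLeast_range_sum_mul_norm_eval_residualPoly_sq {ι : Type*} [Fintype ι] {w t : ι → ℝ}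
    (hw : ∀ j, 0 ≤ w j) {p : ℕ → ℝ[X]} {k : ℕ} (hdeg : ∀ j ≤ k, (p j).natDegree = j)
    (horth : ∀ i ≤ k, ∀ j ≤ k, weightedEvalForm w t (p i) (p j) = if i = j then 1 else 0) :
    IsLeast (Set.range fun c : Fin k → ℂ => ∑ j, w j * ‖(residualPoly c).eval (t j : ℂ)‖ ^ 2)
      (christoffel p k 0) := by
  obtain ⟨⟨q, ⟨hq, hq0⟩, hqB⟩, hlower⟩ := isLeast_christoffel hdeg horth 0
  obtain ⟨c, rfl⟩ := exists_residualPoly_eq hq hq0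
  refine ⟨⟨fun i => c i, ?_⟩, ?_⟩
  · rw [← hqB]
    dsimp only
    rw [weightedEvalForm_apply]
    refine Finset.sum_congr rfl fun j _ => ?_
    rw [eval_ofReal_residualPoly, Complex.norm_real, Real.norm_eq_abs, sq_abs, sq]
  · rintro _ ⟨c, rfl⟩
    refine (hlower ⟨_, ⟨natDegree_residualPoly_le fun i => (c i).re,
      eval_zero_residualPoly _⟩, rfl⟩).trans ?_
    dsimp only
    rw [weightedEvalForm_apply]
    gcongr with j _
    · exact hw j
    rw [← re_eval_residualPoly, ← sq]
    exact sq_le_sq' (neg_le_of_abs_le (Complex.abs_re_le_norm _)) (Complex.re_le_norm _)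

theorem SemiconjBy.aeval {R A : Type*} [CommSemiring R] [Semiring A] [Algebra R A] {a x y : A}
    (h : SemiconjBy a x y) (q : R[X]) : SemiconjBy a (aeval x q) (aeval y q) := by
  induction q using Polynomial.induction_on' with
  | add f g hf hg => simpa only [map_add] using hf.add_right hg
  | monomial n r =>
    simp only [aeval_monomial]
    exact SemiconjBy.mul_right (Algebra.commutes r a).symm (h.pow_right n)

namespace Matrix

variable {n : Type*} [Fintype n] [DecidableEq n]

theorem aeval_diagonal {R : Type*} [CommSemiring R] (d : n → R) (q : R[X]) :
    aeval (diagonal d) q = diagonal fun i => q.eval (d i) := by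
  rw [← diagonalAlgHom_apply R, aeval_algHom_apply, aeval_pi_apply]
  simp

theorem aeval_residualPoly_mulVec {R : Type*} [CommRing R] {k : ℕ} (W : Matrix n n R)
    (c : Fin k → R) (x : n → R) :
    aeval W (residualPoly c) *ᵥ x = x - ∑ i, c i • (W ^ (i : ℕ)) *ᵥ (W *ᵥ x) := by
  simp [residualPoly, sub_mulVec, sum_mulVec, ← Algebra.smul_def, smul_mulVec,
    mulVec_mulVec, pow_succ]

theorem re_star_dotProduct_mulVec_of_semiconjBy {U W : Matrix n n ℂ} (hU : U * Uᴴ = 1)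
    {d : n → ℝ} (h : Uᴴ * W = diagonal (fun i => (d i : ℂ)) * Uᴴ) (v : n → ℂ) :
    (star v ⬝ᵥ W *ᵥ v).re = ∑ i, d i * ‖(Uᴴ *ᵥ v) i‖ ^ 2 := by
  have hW : W = U * diagonal (fun i => (d i : ℂ)) * Uᴴ := by
    rw [Matrix.mul_assoc, ← h, ← Matrix.mul_assoc, hU, Matrix.one_mul]
  have hstar : star v ᵥ* U = star (Uᴴ *ᵥ v) := by rw [star_mulVec, conjTranspose_conjTranspose]
  rw [hW, ← mulVec_mulVec, ← mulVec_mulVec, dotProduct_mulVec, hstar, dotProduct, Complex.re_sum]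
  refine Finset.sum_congr rfl fun i _ => ?_
  rw [mulVec_diagonal, Pi.star_apply, Complex.star_def, mul_left_comm, Complex.conj_mul',
    ← Complex.ofReal_pow, ← Complex.ofReal_mul, Complex.ofReal_re]

theorem conjTranspose_mul_mul_conjTranspose_of_eq_mul_mul {α m n : Type*} [Fintype m] [Fintype n]
    [DecidableEq m] [DecidableEq n] [CommRing α] [StarRing α]
    {X Sig : Matrix m n α} {U : Matrix m m α} {V : Matrix n n α}
    (hU : Uᴴ * U = 1) (hV : Vᴴ * V = 1) (hX : X = U * Sig * Vᴴ) :
    Uᴴ * (X * Xᴴ) = Sig * Sigᴴ * Uᴴ := by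
  simp only [hX, conjTranspose_mul, conjTranspose_conjTranspose, Matrix.mul_assoc]
  rw [← Matrix.mul_assoc Uᴴ, hU, Matrix.one_mul, ← Matrix.mul_assoc Vᴴ, hV, Matrix.one_mul]

theorem conjTranspose_mulVec_mulVec_of_eq_mul_mul {α m n : Type*} [Fintype m] [Fintype n]
    [DecidableEq m] [CommRing α] [StarRing α]
    {X Sig : Matrix m n α} {U : Matrix m m α} {V : Matrix n n α}
    (hU : Uᴴ * U = 1) (hX : X = U * Sig * Vᴴ) (b : n → α) :
    Uᴴ *ᵥ (X *ᵥ b) = Sig *ᵥ (Vᴴ *ᵥ b) := by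
  rw [hX, mulVec_mulVec, mulVec_mulVec, ← Matrix.mul_assoc, ← Matrix.mul_assoc, hU,
    Matrix.one_mul]

section RectangularDiagonal

variable {𝕜 : Type*} [RCLike 𝕜] {N M : ℕ} {σ : Fin N → ℝ} {Sig : Matrix (Fin N) (Fin M) 𝕜}
  (hSig : ∀ i j, Sig i j = if (j : ℕ) = (i : ℕ) then (σ i : 𝕜) else 0)
include hSig

theorem mulVec_apply_of_rectDiagonal (hNM : N ≤ M) (v : Fin M → 𝕜) (i : Fin N) :
    (Sig *ᵥ v) i = σ i * v (Fin.castLE hNM i) := by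
  have hcast : ∀ j : Fin M, (j : ℕ) = i ↔ j = Fin.castLE hNM i := fun j => by simp [Fin.ext_iff]
  simp only [mulVec, dotProduct, hSig, hcast, ite_mul, zero_mul, Finset.sum_ite_eq',
    Finset.mem_univ, if_true]

theorem mul_conjTranspose_of_rectDiagonal (hNM : N ≤ M) :
    Sig * Sigᴴ = diagonal fun i => ((σ i ^ 2 : ℝ) : 𝕜) := by
  ext i i'
  change (Sig *ᵥ fun j => Sigᴴ j i') i = _
  rw [mulVec_apply_of_rectDiagonal hSig hNM, conjTranspose_apply, hSig, diagonal_apply]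
  by_cases h : i = i'
  · subst h
    simp [sq]
  · simp [h, Fin.val_eq_val]

end RectangularDiagonal

end Matrix

theorem re_star_aeval_mulVec_dotProduct_mulVec_of_svd {N M : ℕ} (hNM : N ≤ M)
    {X : Matrix (Fin N) (Fin M) ℂ} {U : Matrix (Fin N) (Fin N) ℂ}
    (hU : U ∈ unitaryGroup (Fin N) ℂ) {V : Matrix (Fin M) (Fin M) ℂ}
    (hV : V ∈ unitaryGroup (Fin M) ℂ) {σ : Fin N → ℝ} (hσ : ∀ j, σ j ≠ 0)
    {Sig : Matrix (Fin N) (Fin M) ℂ}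
    (hSig : ∀ i j, Sig i j = if (j : ℕ) = (i : ℕ) then (σ i : ℂ) else 0)
    (hsvd : X = U * Sig * Vᴴ) {b : Fin M → ℂ} {x : Fin N → ℂ} (hx : (X * Xᴴ) *ᵥ x = X *ᵥ b)
    (r : ℂ[X]) :
    (star (aeval (X * Xᴴ) r *ᵥ x) ⬝ᵥ (X * Xᴴ) *ᵥ (aeval (X * Xᴴ) r *ᵥ x)).re =
      ∑ j, ‖(Vᴴ *ᵥ b) (Fin.castLE hNM j)‖ ^ 2 * ‖r.eval ((σ j ^ 2 : ℝ) : ℂ)‖ ^ 2 := by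
  have hUU : Uᴴ * U = 1 := (mem_unitaryGroup_iff'.mp hU)
  have hUU' : U * Uᴴ = 1 := (mem_unitaryGroup_iff.mp hU)
  have hVV : Vᴴ * V = 1 := (mem_unitaryGroup_iff'.mp hV)
  have hsemi : Uᴴ * (X * Xᴴ) = diagonal (fun j => ((σ j ^ 2 : ℝ) : ℂ)) * Uᴴ := by
    rw [conjTranspose_mul_mul_conjTranspose_of_eq_mul_mul hUU hVV hsvd,
      mul_conjTranspose_of_rectDiagonal hSig hNM]
    rfl
  have hUx : ∀ j, (σ j : ℂ) * (Uᴴ *ᵥ x) j = (Vᴴ *ᵥ b) (Fin.castLE hNM j) := fun j => by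
    have h := congrFun (congrArg (Uᴴ *ᵥ ·) hx) j
    simp only [mulVec_mulVec, hsemi] at h
    rw [← mulVec_mulVec, mulVec_diagonal, ← mulVec_mulVec,
      conjTranspose_mulVec_mulVec_of_eq_mul_mul hUU hsvd,
      mulVec_apply_of_rectDiagonal hSig hNM] at h
    refine mul_left_cancel₀ (Complex.ofReal_ne_zero.mpr (hσ j)) ?_
    push_cast at h ⊢
    linear_combination h
  have hr : Uᴴ * aeval (X * Xᴴ) r = aeval (diagonal fun j => ((σ j ^ 2 : ℝ) : ℂ)) r * Uᴴ :=
    SemiconjBy.aeval hsemi r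
  rw [re_star_dotProduct_mulVec_of_semiconjBy hUU' hsemi, mulVec_mulVec, hr,
    ← mulVec_mulVec, aeval_diagonal]
  refine Finset.sum_congr rfl fun j _ => ?_
  rw [mulVec_diagonal, ← hUx, norm_mul, norm_mul, Complex.norm_real, Real.norm_eq_abs,
    mul_pow, mul_pow, sq_abs]
  ring

theorem stmt_5_general (N M k : ℕ) (hNM : N ≤ M)
    (X : Matrix (Fin N) (Fin M) ℂ)
    (U : Matrix (Fin N) (Fin N) ℂ) (hU : U ∈ Matrix.unitaryGroup (Fin N) ℂ)
    (V : Matrix (Fin M) (Fin M) ℂ) (hV : V ∈ Matrix.unitaryGroup (Fin M) ℂ)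
    (σ : Fin N → ℝ) (hσ : ∀ j, 0 < σ j)
    (Sig : Matrix (Fin N) (Fin M) ℂ)
    (hSig : ∀ (i : Fin N) (j : Fin M),
      Sig i j = if (j : ℕ) = (i : ℕ) then (σ i : ℂ) else 0)
    (hsvd : X = U * Sig * Vᴴ)
    (b : Fin M → ℂ)
    (ν : Measure ℝ)
    (hν : ν = ∑ j : Fin N,
      ENNReal.ofReal (‖(Vᴴ.mulVec b) (Fin.castLE hNM j)‖ ^ 2) • Measure.dirac (σ j ^ 2))
    (p : ℕ → Polynomial ℝ)
    (hdeg : ∀ j ≤ k, (p j).natDegree = j)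
    (horth : ∀ i ≤ k, ∀ j ≤ k,
      ∫ t, (p i).eval t * (p j).eval t ∂ν = if i = j then 1 else 0)
    (x xk : Fin N → ℂ)
    (hx : (X * Xᴴ).mulVec x = X.mulVec b)
    (hxk : xk ∈ Submodule.span ℂ
      (Set.range fun i : Fin k => ((X * Xᴴ) ^ (i : ℕ)).mulVec (X.mulVec b)))
    (hmin : ∀ y ∈ Submodule.span ℂ
        (Set.range fun i : Fin k => ((X * Xᴴ) ^ (i : ℕ)).mulVec (X.mulVec b)),
      (star (x - xk) ⬝ᵥ (X * Xᴴ).mulVec (x - xk)).re ≤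
        (star (x - y) ⬝ᵥ (X * Xᴴ).mulVec (x - y)).re) :
    (star (x - xk) ⬝ᵥ (X * Xᴴ).mulVec (x - xk)).re =
      1 / ∑ j ∈ Finset.range (k + 1), (p j).eval 0 ^ 2 := by
  have hw : ∀ j, 0 ≤ ‖(Vᴴ *ᵥ b) (Fin.castLE hNM j)‖ ^ 2 := fun j => sq_nonneg _
  have horthForm : ∀ i ≤ k, ∀ j ≤ k,
      weightedEvalForm (fun j => ‖(Vᴴ *ᵥ b) (Fin.castLE hNM j)‖ ^ 2) (fun j => σ j ^ 2)
        (p i) (p j) = if i = j then 1 else 0 := fun i hi j hj => by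
    rw [← horth i hi j hj, hν, integral_sum_smul_dirac hw, weightedEvalForm_apply]
    rfl
  have herror : ∀ c : Fin k → ℂ,
      (star (x - ∑ i, c i • ((X * Xᴴ) ^ (i : ℕ)) *ᵥ (X *ᵥ b)) ⬝ᵥ
        (X * Xᴴ) *ᵥ (x - ∑ i, c i • ((X * Xᴴ) ^ (i : ℕ)) *ᵥ (X *ᵥ b))).re =
      ∑ j, ‖(Vᴴ *ᵥ b) (Fin.castLE hNM j)‖ ^ 2 *
        ‖(residualPoly c).eval ((σ j ^ 2 : ℝ) : ℂ)‖ ^ 2 := fun c => by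
    rw [← hx, ← aeval_residualPoly_mulVec]
    exact re_star_aeval_mulVec_dotProduct_mulVec_of_svd hNM hU hV (fun j => (hσ j).ne') hSig
      hsvd hx _
  obtain ⟨c, rfl⟩ := (Submodule.mem_span_range_iff_exists_fun ℂ).mp hxk
  rw [one_div, ← christoffel, herror]
  refine ((isLeast_range_sum_mul_norm_eval_residualPoly_sq hw hdeg horthForm).unique
    ⟨⟨c, rfl⟩, ?_⟩).symm
  rintro _ ⟨c', rfl⟩
  dsimp only
  rw [← herror, ← herror]
  exact hmin _ (Submodule.sum_mem _ fun i _ =>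
    Submodule.smul_mem _ _ (Submodule.subset_span ⟨i, rfl⟩))

/-- For `X ∈ ℂ^{N×M}` with `N ≤ M`, `W = X Xᴴ` positive definite, a fixed SVD
`X = U Σ Vᴴ` with singular values `σ j > 0` and eigenvalues `λ j = σ j ^ 2`, a vector
`b ∈ ℂ^M` with `X b ≠ 0`, and the measure `ν = ∑_j |(Vᴴ b)_j|² δ_{σ_j²}` whose support has
at least `k+2` points, the `k`-th CG iterate `xk` for the normal equations `W x = X b`
has error `e_k = W⁻¹ X b − xk` with `‖e_k‖_W² = 1 / ∑_{j=0}^k p_j(0; ν)²`. -/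
theorem stmt_5 (N M k : ℕ) (hNM : N ≤ M)
    (X : Matrix (Fin N) (Fin M) ℂ)
    (U : Matrix (Fin N) (Fin N) ℂ) (hU : U ∈ Matrix.unitaryGroup (Fin N) ℂ)
    (V : Matrix (Fin M) (Fin M) ℂ) (hV : V ∈ Matrix.unitaryGroup (Fin M) ℂ)
    (σ : Fin N → ℝ) (hσ : ∀ j, 0 < σ j)
    (Sig : Matrix (Fin N) (Fin M) ℂ)
    (hSig : ∀ (i : Fin N) (j : Fin M),
      Sig i j = if (j : ℕ) = (i : ℕ) then (σ i : ℂ) else 0)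
    (hsvd : X = U * Sig * Vᴴ)
    (hpd : (X * Xᴴ).PosDef)
    (b : Fin M → ℂ) (hXb : X.mulVec b ≠ 0)
    (ν : Measure ℝ)
    (hν : ν = ∑ j : Fin N,
      ENNReal.ofReal (‖(Vᴴ.mulVec b) (Fin.castLE hNM j)‖ ^ 2) • Measure.dirac (σ j ^ 2))
    (hsupp : ∃ s : Finset ℝ, k + 2 ≤ s.card ∧ ∀ x ∈ s, ν {x} ≠ 0)
    (p : ℕ → Polynomial ℝ)
    (hdeg : ∀ j ≤ k, (p j).natDegree = j)
    (hlead : ∀ j ≤ k, 0 < (p j).leadingCoeff)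
    (horth : ∀ i ≤ k, ∀ j ≤ k,
      ∫ t, (p i).eval t * (p j).eval t ∂ν = if i = j then 1 else 0)
    (x xk : Fin N → ℂ)
    (hx : (X * Xᴴ).mulVec x = X.mulVec b)
    (hxk : xk ∈ Submodule.span ℂ
      (Set.range fun i : Fin k => ((X * Xᴴ) ^ (i : ℕ)).mulVec (X.mulVec b)))
    (hmin : ∀ y ∈ Submodule.span ℂ
        (Set.range fun i : Fin k => ((X * Xᴴ) ^ (i : ℕ)).mulVec (X.mulVec b)),
      (star (x - xk) ⬝ᵥ (X * Xᴴ).mulVec (x - xk)).re ≤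
        (star (x - y) ⬝ᵥ (X * Xᴴ).mulVec (x - y)).re) :
    (star (x - xk) ⬝ᵥ (X * Xᴴ).mulVec (x - xk)).re =
      1 / ∑ j ∈ Finset.range (k + 1), (p j).eval 0 ^ 2 :=
  stmt_5_general N M k hNM X U hU V hV σ hσ Sig hSig hsvd b ν hν p hdeg horth x xk hx hxk hmin
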